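/- Let φ : B(H) → B(H) be an additive map whose range contains all operators of rank at most two, and suppose H_{φ(T)φ(S)*}({λ}) = H_{TS*}({λ}) for all T, S ∈ B(H) and all λ ∈ ℂ. Then there exist a unitary operator V ∈ B(H) and a nonzero scalar μ such that φ(T) = μ T V* for all T ∈ B(H). -/

import Mathlib

open scoped InnerProductSpace Pointwise
open ContinuousLinearMap

variable {H : Type*} [NormedAddCommGroup H] [InnerProductSpace ℂ H] [CompleteSpace H]

/-- The local resolvent set of `T` at `x`. -/
def localResolvent (T : H →L[ℂ] H) (x : H) : Set ℂ :=
  {μ | ∃ U : Set ℂ, IsOpen U ∧ μ ∈ U ∧ ∃ f : ℂ → H, AnalyticOnNhd ℂ f U ∧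
      ∀ z ∈ U, z • f z - T (f z) = x}

/-- The local spectrum of `T` at `x`. -/
def localSpectrum (T : H →L[ℂ] H) (x : H) : Set ℂ := (localResolvent T x)ᶜ

/-- The local spectral subspace `H_T(F)`. -/
def localSubspace (T : H →L[ℂ] H) (F : Set ℂ) : Set H :=
  {x | localSpectrum T x ⊆ F}

/-- The rank-one operator `x ⊗ y : z ↦ ⟨z,y⟩x` (inner product conjugate-linear in
the second variable, i.e. `⟪y, z⟫` in Mathlib's convention). -/
noncomputable def rankOne (x y : H) : H →L[ℂ] H := (innerSL ℂ y).smulRight x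

/-- The single-valued extension property. -/
def HasSVEP (T : H →L[ℂ] H) : Prop :=
  ∀ U : Set ℂ, IsOpen U → ∀ f : ℂ → H, AnalyticOnNhd ℂ f U →
    (∀ μ ∈ U, μ • f μ - T (f μ) = 0) → ∀ μ ∈ U, f μ = 0

/-!
Everything is read off rank-one operators `rankOne x y = x ⊗ y`. If `u ⊗ v` has `x` in its
local spectral subspace at `{λ}` with `λ ≠ ⟪v, u⟫`, then evaluating the local resolvent equation
at `⟪v, u⟫` gives `⟪v, x⟫ = 0`; hence the local spectral subspaces of `a ⊗ p` determine `⟪p, a⟫`.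
Testing the hypothesis against eigenvectors of `φ(T) φ(S)*` with `φ(S)` rank one shows that
`φ(T) x ∈ ran T`, so `φ(u ⊗ q) = u ⊗ y`, and additivity in `u` (with `dim H ≥ 3`) makes
`y = ν q` independent of `u`. Comparing `φ(e ⊗ a) φ(e ⊗ b)*` with `(e ⊗ a)(e ⊗ b)*` shows that
`ν` preserves inner products, so it is an isometry `V`, and comparing `φ(T) φ(p ⊗ q)*` with
`T (p ⊗ q)*` gives `φ(T) V = T`. Applied to a preimage `S` of `e ⊗ y`, this makes `S` rank one
and forces `V V* y = y`; thus `V` is unitary and `φ(T) = T V*`.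
-/

open Submodule

set_option linter.unusedSectionVars false

section LocalSpectrum

lemma mem_localSubspace_singleton_of_apply_eq {T : H →L[ℂ] H} {x : H} {t : ℂ}
    (h : T x = t • x) : x ∈ localSubspace T {t} := by
  intro μ hμ
  by_contra hμt
  refine hμ ⟨{z | z ≠ t}, isOpen_ne, hμt, fun z => (z - t)⁻¹ • x, ?_, fun z hz => ?_⟩
  · exact ((analyticOnNhd_id.sub analyticOnNhd_const).inv
      fun z hz => sub_ne_zero.mpr hz).smul analyticOnNhd_const
  · rw [map_smul, h, smul_smul, smul_comm, smul_smul, ← sub_smul, ← sub_mul,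
      mul_inv_cancel₀ (sub_ne_zero.mpr hz), one_smul]

lemma exists_sub_apply_eq_of_mem_localSubspace {T : H →L[ℂ] H} {F : Set ℂ} {x : H}
    (hx : x ∈ localSubspace T F) {μ : ℂ} (hμ : μ ∉ F) : ∃ w, μ • w - T w = x := by
  by_contra h
  exact hμ (hx fun ⟨U, _, hμU, f, _, hf⟩ => h ⟨f μ, hf μ hμU⟩)

lemma exists_apply_eq_of_mem_localSubspace_mul {A B : H →L[ℂ] H} {x : H} {l : ℂ}
    (hx : x ∈ localSubspace (A * B) {l}) (hl : l ≠ 0) : ∃ k, A k = x := by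
  obtain ⟨w, hw⟩ := exists_sub_apply_eq_of_mem_localSubspace hx (Ne.symm hl)
  exact ⟨-B w, by rw [← hw, map_neg, zero_smul, zero_sub]; rfl⟩

end LocalSpectrum

section RankOne

lemma rankOne_apply (x y z : H) : rankOne x y z = ⟪y, z⟫_ℂ • x := rfl

lemma adjoint_rankOne (x y : H) : adjoint (rankOne x y) = rankOne y x := by
  refine ext fun z => ext_inner_right ℂ fun w => ?_
  rw [adjoint_inner_left, rankOne_apply, rankOne_apply, inner_smul_left, inner_smul_right,
    inner_conj_symm, mul_comm]

lemma mul_rankOne (A : H →L[ℂ] H) (x y : H) : A * rankOne x y = rankOne (A x) y := by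
  ext z
  simp [rankOne_apply]

lemma rankOne_mul (x y : H) (A : H →L[ℂ] H) : rankOne x y * A = rankOne x (adjoint A y) := by
  ext z
  simp [rankOne_apply, adjoint_inner_left]

lemma rankOne_mul_adjoint_rankOne (x y u v : H) :
    rankOne x y * adjoint (rankOne u v) = rankOne (⟪y, v⟫_ℂ • x) u := by
  rw [adjoint_rankOne, mul_rankOne, rankOne_apply]

lemma rankOne_zero_left (y : H) : rankOne 0 y = 0 := by
  ext z
  simp [rankOne_apply]

lemma rankOne_add_left (u v y : H) : rankOne (u + v) y = rankOne u y + rankOne v y := by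
  ext z
  simp [rankOne_apply, smul_add]

lemma rankOne_right_injective {u : H} (hu : u ≠ 0) : Function.Injective (rankOne u) := by
  intro y y' h
  refine ext_inner_right ℂ fun z => ?_
  simpa [rankOne_apply, hu] using congrArg (fun A => A z) h

lemma range_rankOne_le (x y : H) : LinearMap.range (rankOne x y : H →ₗ[ℂ] H) ≤ ℂ ∙ x := by
  rintro _ ⟨z, rfl⟩
  exact smul_mem _ _ (mem_span_singleton_self x)

lemma finrank_range_rankOne_le (x y : H) :
    Module.finrank ℂ (LinearMap.range (rankOne x y : H →ₗ[ℂ] H)) ≤ 1 :=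
  (finrank_mono (range_rankOne_le x y)).trans ((finrank_span_le_card _).trans (by simp))

lemma exists_eq_rankOne_of_forall_apply_mem_span {A : H →L[ℂ] H} {u : H}
    (hA : ∀ x, A x ∈ ℂ ∙ u) : ∃ y, A = rankOne u y := by
  rcases eq_or_ne u 0 with rfl | hu
  · exact ⟨0, ext fun x => by simpa [rankOne_zero_left] using hA x⟩
  refine ⟨(⟪u, u⟫_ℂ)⁻¹ • adjoint A u, ext fun x => ?_⟩
  obtain ⟨c, hc⟩ := mem_span_singleton.mp (hA x)
  have huu : ⟪u, u⟫_ℂ ≠ 0 := inner_self_ne_zero.mpr hu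
  rw [rankOne_apply, inner_smul_left, adjoint_inner_left, ← hc, inner_smul_right, map_inv₀,
    inner_self_conj, mul_comm c, inv_mul_cancel_left₀ huu]

lemma inner_eq_zero_of_mem_localSubspace_rankOne {u v x : H} {l : ℂ}
    (hx : x ∈ localSubspace (rankOne u v) {l}) (hl : l ≠ ⟪v, u⟫_ℂ) : ⟪v, x⟫_ℂ = 0 := by
  obtain ⟨w, hw⟩ := exists_sub_apply_eq_of_mem_localSubspace hx (Ne.symm hl)
  rw [← hw, rankOne_apply, inner_sub_right, inner_smul_right, inner_smul_right, mul_comm,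
    sub_self]

lemma inner_eq_of_forall_localSubspace_rankOne_eq {a a' p : H}
    (h : ∀ l, localSubspace (rankOne a p) {l} = localSubspace (rankOne a' p) {l}) :
    ⟪p, a⟫_ℂ = ⟪p, a'⟫_ℂ := by
  -- `b` is an eigenvector of `rankOne b p` for the eigenvalue `⟪p, b⟫`
  have key : ∀ b b' : H,
      (∀ l, localSubspace (rankOne b p) {l} = localSubspace (rankOne b' p) {l}) →
      ⟪p, b⟫_ℂ ≠ ⟪p, b'⟫_ℂ → ⟪p, b⟫_ℂ = 0 := fun b b' h hne =>
    inner_eq_zero_of_mem_localSubspace_rankOne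
      (h _ ▸ mem_localSubspace_singleton_of_apply_eq (rankOne_apply b p b)) hne
  by_contra hne
  exact hne ((key a a' h hne).trans (key a' a (fun l => (h l).symm) (Ne.symm hne)).symm)

end RankOne

section InnerMapMap

variable {𝕜 E F : Type*} [RCLike 𝕜] [NormedAddCommGroup E] [InnerProductSpace 𝕜 E]
  [NormedAddCommGroup F] [InnerProductSpace 𝕜 F] {f : E → F}

lemma map_add_of_inner_map_map (hf : ∀ x y, ⟪f x, f y⟫_𝕜 = ⟪x, y⟫_𝕜) (x y : E) :
    f (x + y) = f x + f y := by
  rw [← sub_eq_zero, ← inner_self_eq_zero (𝕜 := 𝕜)]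
  simp only [inner_sub_left, inner_sub_right, inner_add_left, inner_add_right, hf]
  ring

lemma map_smul_of_inner_map_map (hf : ∀ x y, ⟪f x, f y⟫_𝕜 = ⟪x, y⟫_𝕜) (c : 𝕜) (x : E) :
    f (c • x) = c • f x := by
  rw [← sub_eq_zero, ← inner_self_eq_zero (𝕜 := 𝕜)]
  simp only [inner_sub_left, inner_sub_right, inner_smul_left, inner_smul_right, hf]
  ring

def LinearIsometry.ofInnerMapMap (f : E → F) (hf : ∀ x y, ⟪f x, f y⟫_𝕜 = ⟪x, y⟫_𝕜) :
    E →ₗᵢ[𝕜] F :=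
  LinearMap.isometryOfInner
    { toFun := f
      map_add' := map_add_of_inner_map_map hf
      map_smul' := map_smul_of_inner_map_map hf } hf

end InnerMapMap

section AdditiveRankOne

lemma nontrivial_of_not_finiteDimensional (hH : ¬ FiniteDimensional ℂ H) : Nontrivial H :=
  not_subsingleton_iff_nontrivial.1 fun _ => hH inferInstance

lemma exists_notMem_span_pair (hH : ¬ FiniteDimensional ℂ H) (u v : H) :
    ∃ w, w ∉ span ℂ {u, v} := by
  by_contra! h
  have htop : span ℂ {u, v} = ⊤ := eq_top_iff.2 fun w _ => h w
  exact hH (Module.finite_def.2 (htop ▸ fg_span (Set.toFinite _)))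

lemma eq_of_add_rankOne_eq {u v a b c : H} (huv : LinearIndependent ℂ ![u, v])
    (h : rankOne u a + rankOne v b = rankOne (u + v) c) : a = c ∧ b = c := by
  have hx : ∀ x, ⟪a, x⟫_ℂ = ⟪c, x⟫_ℂ ∧ ⟪b, x⟫_ℂ = ⟪c, x⟫_ℂ := fun x =>
    huv.eq_of_pair (by simpa [rankOne_apply, smul_add] using congrArg (fun A => A x) h)
  exact ⟨ext_inner_right ℂ fun x => (hx x).1, ext_inner_right ℂ fun x => (hx x).2⟩

lemma eq_of_linearIndependent_of_eq_rankOne {g : H → H →L[ℂ] H}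
    (hg : ∀ u v, g (u + v) = g u + g v)
    {y : H → H} (hy : ∀ u, g u = rankOne u (y u)) {u v : H}
    (huv : LinearIndependent ℂ ![u, v]) : y u = y v := by
  have h := hy (u + v)
  rw [hg, hy u, hy v] at h
  obtain ⟨hu, hv⟩ := eq_of_add_rankOne_eq huv h
  rw [hu, hv]

lemma exists_forall_eq_rankOne (hH : ¬ FiniteDimensional ℂ H) {g : H → H →L[ℂ] H}
    (hg : ∀ u v, g (u + v) = g u + g v) (hrank : ∀ u, ∃ y, g u = rankOne u y) :
    ∃ y, ∀ u, g u = rankOne u y := by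
  choose y hy using hrank
  have := nontrivial_of_not_finiteDimensional hH
  obtain ⟨u₀, hu₀⟩ := exists_ne (0 : H)
  refine ⟨y u₀, fun u => ?_⟩
  rcases eq_or_ne u 0 with rfl | hu
  · rw [hy, rankOne_zero_left, rankOne_zero_left]
  -- a direction `w` independent of both `u₀` and `u` links them
  obtain ⟨w, hw⟩ := exists_notMem_span_pair hH u₀ u
  have indep : ∀ v ∈ ({u₀, u} : Set H), v ≠ 0 → LinearIndependent ℂ ![v, w] := fun v hv hv0 =>
    (LinearIndependent.pair_iff' hv0).2 fun c hc => hw (hc ▸ smul_mem _ c (subset_span hv))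
  rw [hy u, eq_of_linearIndependent_of_eq_rankOne hg hy (indep u (by simp) hu),
    eq_of_linearIndependent_of_eq_rankOne hg hy (indep u₀ (by simp) hu₀)]

end AdditiveRankOne

def PreservesLocalSubspaces (φ : (H →L[ℂ] H) → H →L[ℂ] H) : Prop :=
  ∀ (T S : H →L[ℂ] H) (lam : ℂ),
    localSubspace (φ T * adjoint (φ S)) {lam} = localSubspace (T * adjoint S) {lam}

namespace PreservesLocalSubspaces

variable {φ : (H →L[ℂ] H) → H →L[ℂ] H}

lemma exists_apply_eq (hloc : PreservesLocalSubspaces φ)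
    (hφ : ∀ a b : H, ∃ S, φ S = rankOne a b) (T : H →L[ℂ] H) (x : H) : ∃ k, T k = φ T x := by
  rcases eq_or_ne (φ T x) 0 with h0 | hw
  · exact ⟨0, by rw [h0, map_zero]⟩
  obtain ⟨S, hS⟩ := hφ (φ T x) x
  have heig : (φ T * adjoint (φ S)) (φ T x) = ⟪φ T x, φ T x⟫_ℂ • φ T x := by
    rw [hS, adjoint_rankOne, mul_rankOne, rankOne_apply]
  have hmem := mem_localSubspace_singleton_of_apply_eq heig
  rw [hloc] at hmem
  exact exists_apply_eq_of_mem_localSubspace_mul hmem (inner_self_ne_zero.mpr hw)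

lemma exists_apply_rankOne_eq (hloc : PreservesLocalSubspaces φ)
    (hφ : ∀ a b : H, ∃ S, φ S = rankOne a b) (u q : H) : ∃ y, φ (rankOne u q) = rankOne u y :=
  exists_eq_rankOne_of_forall_apply_mem_span fun x =>
    let ⟨k, hk⟩ := hloc.exists_apply_eq hφ (rankOne u q) x
    hk ▸ range_rankOne_le u q ⟨k, rfl⟩

lemma exists_forall_apply_rankOne_eq (hloc : PreservesLocalSubspaces φ)
    (hH : ¬ FiniteDimensional ℂ H)
    (hadd : ∀ T S, φ (T + S) = φ T + φ S) (hφ : ∀ a b : H, ∃ S, φ S = rankOne a b) :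
    ∃ ν : H → H, ∀ p q, φ (rankOne p q) = rankOne p (ν q) := by
  choose ν hν using fun q => exists_forall_eq_rankOne hH (g := fun u => φ (rankOne u q))
    (fun u v => by simp only [rankOne_add_left, hadd])
    (fun u => hloc.exists_apply_rankOne_eq hφ u q)
  exact ⟨ν, fun p q => hν q p⟩

variable {ν : H → H}

lemma inner_map_map [Nontrivial H] (hloc : PreservesLocalSubspaces φ)
    (hν : ∀ p q, φ (rankOne p q) = rankOne p (ν q)) (a b : H) : ⟪ν a, ν b⟫_ℂ = ⟪a, b⟫_ℂ := by
  obtain ⟨e, he⟩ := exists_ne (0 : H)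
  have h := inner_eq_of_forall_localSubspace_rankOne_eq (p := e) fun l => by
    simpa only [hν, rankOne_mul_adjoint_rankOne] using hloc (rankOne e a) (rankOne e b) l
  rw [inner_smul_right, inner_smul_right] at h
  exact mul_right_cancel₀ (inner_self_ne_zero.mpr he) h

lemma apply_map_eq (hloc : PreservesLocalSubspaces φ)
    (hν : ∀ p q, φ (rankOne p q) = rankOne p (ν q)) (T : H →L[ℂ] H) (q : H) : φ T (ν q) = T q :=
  ext_inner_left ℂ fun p => inner_eq_of_forall_localSubspace_rankOne_eq fun l => by
    simpa only [hν, adjoint_rankOne, mul_rankOne] using hloc T (rankOne p q) l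

end PreservesLocalSubspaces

lemma mul_adjoint_eq_one_of_forall_mul_eq [Nontrivial H] {φ : (H →L[ℂ] H) → H →L[ℂ] H}
    (hφ : ∀ a b : H, ∃ S, φ S = rankOne a b) {V : H →L[ℂ] H} (hV : ∀ T, φ T * V = T)
    (hVrankOne : ∀ p q, φ (rankOne p q) = rankOne p (V q)) : V * adjoint V = 1 := by
  obtain ⟨e, he⟩ := exists_ne (0 : H)
  ext y
  obtain ⟨S, hS⟩ := hφ e y
  have hSV : S = rankOne e (adjoint V y) := by rw [← hV S, hS, rankOne_mul]
  have h : rankOne e y = rankOne e (V (adjoint V y)) := by rw [← hS, hSV, hVrankOne]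
  exact (rankOne_right_injective he h).symm

theorem stmt16 (hH : ¬ FiniteDimensional ℂ H)
    (φ : (H →L[ℂ] H) → (H →L[ℂ] H))
    (hadd : ∀ T S : H →L[ℂ] H, φ (T + S) = φ T + φ S)
    (hrange : ∀ R : H →L[ℂ] H,
      Module.finrank ℂ (LinearMap.range (R : H →ₗ[ℂ] H)) ≤ 2 → ∃ T, φ T = R)
    (hloc : ∀ (T S : H →L[ℂ] H) (lam : ℂ),
      localSubspace (φ T * ContinuousLinearMap.adjoint (φ S)) {lam}
        = localSubspace (T * ContinuousLinearMap.adjoint S) {lam}) :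
    ∃ V : H →L[ℂ] H,
      (ContinuousLinearMap.adjoint V * V = 1 ∧ V * ContinuousLinearMap.adjoint V = 1) ∧
      ∃ μ : ℂ, μ ≠ 0 ∧
        ∀ T : H →L[ℂ] H, φ T = μ • (T * ContinuousLinearMap.adjoint V) := by
  replace hloc : PreservesLocalSubspaces φ := hloc
  have hφ : ∀ a b : H, ∃ S, φ S = rankOne a b :=
    fun a b => hrange _ ((finrank_range_rankOne_le a b).trans one_le_two)
  have := nontrivial_of_not_finiteDimensional hH
  obtain ⟨ν, hν⟩ := hloc.exists_forall_apply_rankOne_eq hH hadd hφ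
  let V := (LinearIsometry.ofInnerMapMap ν (hloc.inner_map_map hν)).toContinuousLinearMap
  have hV : ∀ T, φ T * V = T := fun T => ext (hloc.apply_map_eq hν T)
  have hVV : V * adjoint V = 1 := mul_adjoint_eq_one_of_forall_mul_eq hφ hV hν
  refine ⟨V, ⟨(inner_map_map_iff_adjoint_comp_self V).1 (hloc.inner_map_map hν), hVV⟩,
    1, one_ne_zero, fun T => ?_⟩
  calc φ T = φ T * V * adjoint V := by rw [mul_assoc, hVV, mul_one]
    _ = (1 : ℂ) • (T * adjoint V) := by rw [hV, one_smul]
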